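/- The function h(u) = 2(u − √2·u² + √2)/(−u⁴ + u² + 2) is strictly decreasing on the interval (1, √2). -/

import Mathlib

/-!
Since `√2` is a root of both numerator and denominator, `h u = 2 (√2 u + 1) / ((u + √2) (u² + 1))`
for `u ≠ √2`. In the variable `t = √2 u + 1`, which runs through `(1 + √2, 3) ⊆ [2, ∞)`, this
becomes `h u = 4√2 / g t` with `g t = t² - t + 1 + 3 / t`, and `g` is increasing on `[2, ∞)`
because `g b - g a = (b - a) (a + b - 1 - 3 / (a b))`.
-/

noncomputable def h (u : ℝ) : ℝ :=
  2 * (u - Real.sqrt 2 * u ^ 2 + Real.sqrt 2) / (-u ^ 4 + u ^ 2 + 2)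

open Real Set

noncomputable def g (t : ℝ) : ℝ := t ^ 2 - t + 1 + 3 / t

lemma g_pos {t : ℝ} (ht : 0 < t) : 0 < g t := by
  have : 0 < 3 / t := by positivity
  unfold g
  nlinarith [sq_nonneg (t - 1)]

lemma strictMonoOn_g : StrictMonoOn g (Ici 2) := by
  intro a (ha : 2 ≤ a) b (hb : 2 ≤ b) hab
  have hab_ge : 4 ≤ a * b := by nlinarith
  have hdiff : g b - g a = (b - a) * (a + b - 1 - 3 / (a * b)) := by
    unfold g
    field_simp
    ring
  have hinv : 3 / (a * b) ≤ 3 / 4 := div_le_div_of_nonneg_left (by norm_num) (by norm_num) hab_ge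
  have : 0 < (b - a) * (a + b - 1 - 3 / (a * b)) := mul_pos (by linarith) (by linarith)
  linarith

lemma h_eq_div_g {u : ℝ} (hu₀ : 0 ≤ u) (hu : u ≠ √2) : h u = 4 * √2 / g (√2 * u + 1) := by
  have hs : √2 ^ 2 = 2 := sq_sqrt (by norm_num)
  have ht : 0 < √2 * u + 1 := by positivity
  have hden : -u ^ 4 + u ^ 2 + 2 = (√2 - u) * ((√2 + u) * (u ^ 2 + 1)) := by
    linear_combination (-(u ^ 2 + 1)) * hs
  have hnum : u - √2 * u ^ 2 + √2 = (√2 - u) * (√2 * u + 1) := by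
    linear_combination (-u) * hs
  rw [h, hden, hnum, mul_left_comm, mul_div_mul_left _ _ (sub_ne_zero.2 hu.symm),
    div_eq_div_iff (by positivity) (g_pos ht).ne', g]
  field_simp
  linear_combination (2 * √2 * u ^ 3 - 4) * hs

theorem stmt_15 : StrictAntiOn h (Set.Ioo (1 : ℝ) (Real.sqrt 2)) := by
  have hsub : ∀ u ∈ Ioo (1 : ℝ) √2, 2 ≤ √2 * u + 1 := fun u hu => by
    nlinarith [one_lt_sqrt_two, hu.1]
  intro a ha b hb hab
  rw [h_eq_div_g (by linarith [ha.1]) ha.2.ne, h_eq_div_g (by linarith [hb.1]) hb.2.ne]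
  refine div_lt_div_of_pos_left (by positivity) (g_pos (by linarith [hsub a ha])) ?_
  exact strictMonoOn_g (hsub a ha) (hsub b hb) (by gcongr)
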